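/- Let D be a DFA and G a CFG in C2F⁺ᵉ form. In the triple intersection grammar, if w is derivable from ⟨p,A,q⟩, then the length of w equals the number of DFA transitions consumed going from p to q, i.e., δ*(p,w) = q and in particular if |w| = 0 then p = q. -/

import Mathlib

/-- A context-free grammar in C2F⁺ᵉ form: productions of shape
`A → σ`, `A → ε`, `A → B`, `A → BC`. -/
structure C2F (N T : Type) where
  prodTerm : N → T → Prop
  prodEps : N → Prop
  prodUnit : N → N → Prop
  prodBin : N → N → N → Prop

namespace C2F

/-- `G.Derives A w` : the terminal word `w` is derivable from nonterminal `A`. -/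
inductive Derives {N T : Type} (G : C2F N T) : N → List T → Prop
  | term {A : N} {σ : T} : G.prodTerm A σ → Derives G A [σ]
  | eps {A : N} : G.prodEps A → Derives G A []
  | unit {A B : N} {w : List T} : G.prodUnit A B → Derives G B w → Derives G A w
  | bin {A B C : N} {u v : List T} : G.prodBin A B C → Derives G B u → Derives G C v →
      Derives G A (u ++ v)

end C2F

/-- Derivability from the nonterminal `⟨p, A, q⟩` of the triple intersection grammar of a
C2F⁺ᵉ grammar `G` and a DFA `D`. -/
inductive TripleDerives {N T Q : Type} (G : C2F N T) (D : DFA T Q) : Q → N → Q → List T → Prop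
  | term {p q : Q} {A : N} {σ : T} : G.prodTerm A σ → D.step p σ = q →
      TripleDerives G D p A q [σ]
  | eps {p : Q} {A : N} : G.prodEps A → TripleDerives G D p A p []
  | unit {p q : Q} {A B : N} {w : List T} : G.prodUnit A B → TripleDerives G D p B q w →
      TripleDerives G D p A q w
  | bin {p q r : Q} {A B C : N} {u v : List T} : G.prodBin A B C →
      TripleDerives G D p B q u → TripleDerives G D q C r v →
      TripleDerives G D p A r (u ++ v)

theorem TripleDerives.evalFrom_eq {N T Q : Type} {G : C2F N T} {D : DFA T Q} {p q : Q} {A : N}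
    {w : List T} (h : TripleDerives G D p A q w) : D.evalFrom p w = q := by
  induction h with
  | term _ hstep => exact hstep
  | eps _ => rfl
  | unit _ _ ih => exact ih
  | bin _ _ _ ihB ihC => rw [DFA.evalFrom_of_append, ihB, ihC]

/-- a derivation from `⟨p,A,q⟩` consumes exactly the DFA transitions from `p`
to `q`: `δ*(p,w) = q`, and in particular `|w| = 0` implies `p = q`. -/
theorem triple_run {N T Q : Type} (G : C2F N T) (D : DFA T Q) (p q : Q) (A : N) (w : List T)
    (h : TripleDerives G D p A q w) :
    D.evalFrom p w = q ∧ (w.length = 0 → p = q) := by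
  have hrun := h.evalFrom_eq
  refine ⟨hrun, fun hw => ?_⟩
  rwa [List.length_eq_zero_iff.mp hw, DFA.evalFrom_nil] at hrun
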